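/- arXiv:1901.08834 — 3 statements merged into one kernel-verified Lean document; each statement's English description precedes it below -/
import Mathlib

section
/- Let A be a finite set, ω ∈ A^{ℤ^d} a coloring, (B,‖·‖) an arbitrary Banach space, (Q_j)_{j∈ℕ} a Følner sequence in ℤ^d, and F : F → B a bounded, ω-invariant, almost additive field with boundary term b. Assume that for every finite pattern P : Λ → A (Λ ∈ F) the frequency ν_P := lim_{j→∞} ♯_P(ω|_{Q_j})/|Q_j| exists. Then the limit F̄ := lim_{j→∞} F(Q_j)/|Q_j| exists in B, the limit lim_{L→∞} Σ_{P∈A^{Λ_L}} ν_P F̃(P)/|Λ_L| exists in B, and the two limits are equal. -/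
open Filter Topology

/-- The group `ℤ^d`. -/
abbrev Zd (d : ℕ) := Fin d → ℤ

/-- The `ℓ¹`-distance on `ℤ^d`. -/
def distZ {d : ℕ} (v w : Zd d) : ℕ := ∑ i, (v i - w i).natAbs

/-- The translation action `τ̃_g Λ = Λ - g` on finite subsets of `ℤ^d`. -/
def translateZ {d : ℕ} (g : Zd d) (Λ : Finset (Zd d)) : Finset (Zd d) :=
  Λ.image (fun v => v - g)

/-- The (two-sided) `r`-boundary of a finite set `Λ ⊆ ℤ^d`. -/
def rBoundaryZ {d : ℕ} (r : ℕ) (Λ : Finset (Zd d)) : Set (Zd d) :=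
  {x | x ∉ Λ ∧ ∃ v ∈ Λ, distZ x v ≤ r} ∪ {v | v ∈ Λ ∧ ∃ x, x ∉ Λ ∧ distZ v x ≤ r}

/-- A Følner sequence in `ℤ^d`: nonempty finite sets whose `r`-boundary is
asymptotically negligible compared to the volume, for every `r > 0`. -/
def IsFolnerZ {d : ℕ} (Q : ℕ → Finset (Zd d)) : Prop :=
  (∀ j, (Q j).Nonempty) ∧
  ∀ r : ℕ, 0 < r →
    Tendsto (fun j => ((rBoundaryZ r (Q j)).ncard : ℝ) / (Q j).card) atTop (nhds 0)

/-- A boundary term on the finite subsets of `ℤ^d`. -/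
structure BoundaryTermZ (d : ℕ) where
  b : Finset (Zd d) → ℝ
  nonneg : ∀ Λ, 0 ≤ b Λ
  invariant : ∀ g Λ, b (translateZ g Λ) = b Λ
  folner : ∀ Q : ℕ → Finset (Zd d), IsFolnerZ Q →
    Tendsto (fun j => b (Q j) / (Q j).card) atTop (nhds 0)
  bounded : ∃ D : ℝ, ∀ Λ : Finset (Zd d), Λ.Nonempty → b Λ ≤ D * Λ.card
  union_le : ∀ Λ Λ', b (Λ ∪ Λ') ≤ b Λ + b Λ'
  inter_le : ∀ Λ Λ', b (Λ ∩ Λ') ≤ b Λ + b Λ'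
  sdiff_le : ∀ Λ Λ', b (Λ \ Λ') ≤ b Λ + b Λ'

/-- The bound `D_b` of a boundary term. -/
noncomputable def BoundaryTermZ.D {d : ℕ} (b : BoundaryTermZ d) : ℝ :=
  sSup {x | ∃ Λ : Finset (Zd d), Λ.Nonempty ∧ x = b.b Λ / Λ.card}

/-- Two patterns (given as total functions restricted to their domains) are
equivalent iff one is a translate of the other:  `P' |_{Λ'}` is the
`g`-translate of `P |_Λ`. -/
def PatEquivZ {d : ℕ} {A : Type*} (Λ : Finset (Zd d)) (P : Zd d → A)
    (Λ' : Finset (Zd d)) (P' : Zd d → A) : Prop :=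
  ∃ g : Zd d, Λ' = translateZ g Λ ∧ ∀ v ∈ Λ, P' (v - g) = P v

open Classical in
/-- `♯_P P'`: the number of occurrences of (translates of) the pattern `P|_Λ`
in the pattern `P'|_{Λ'}`. -/
noncomputable def sharpZ {d : ℕ} {A : Type*} (Λ : Finset (Zd d)) (P : Zd d → A)
    (Λ' : Finset (Zd d)) (P' : Zd d → A) : ℕ :=
  (Λ'.powerset.filter (fun Λ'' => PatEquivZ Λ P Λ'' P')).card

/-- Almost additivity of a field with respect to a boundary term. -/
def AlmostAdditiveZ {d : ℕ} {B : Type*} [NormedAddCommGroup B]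
    (F : Finset (Zd d) → B) (b : BoundaryTermZ d) : Prop :=
  ∀ (n : ℕ) (Λs : Fin n → Finset (Zd d)),
    (∀ i j, i ≠ j → Disjoint (Λs i) (Λs j)) →
    ‖F (Finset.univ.biUnion Λs) - ∑ i, F (Λs i)‖ ≤ ∑ i, b.b (Λs i)

/-- `ω`-invariance of a field. -/
def InvariantZ {d : ℕ} {A : Type*} {B : Type*} (ω : Zd d → A)
    (F : Finset (Zd d) → B) : Prop :=
  ∀ Λ Λ' : Finset (Zd d), PatEquivZ Λ ω Λ' ω → F Λ = F Λ'

/-- `Ft` is the pattern function of the `ω`-invariant field `F`. -/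
def IsPatternFnZ {d : ℕ} {A : Type*} {B : Type*} [Zero B] (ω : Zd d → A)
    (F : Finset (Zd d) → B) (Ft : Finset (Zd d) → (Zd d → A) → B) : Prop :=
  (∀ (Λ : Finset (Zd d)) (P : Zd d → A) (Λ' : Finset (Zd d)),
      PatEquivZ Λ P Λ' ω → Ft Λ P = F Λ') ∧
  (∀ (Λ : Finset (Zd d)) (P : Zd d → A),
      (∀ Λ' : Finset (Zd d), ¬ PatEquivZ Λ P Λ' ω) → Ft Λ P = 0)

/-- Extension of a pattern `P : Λ → A` to a total function on `ℤ^d`,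
filling in with the coloring `ω` off `Λ` (the quantities below only depend on
the restriction to `Λ`). -/
def extendPatZ {d : ℕ} {A : Type*} (ω : Zd d → A) (Λ : Finset (Zd d))
    (P : {x // x ∈ Λ} → A) : Zd d → A :=
  fun v => if h : v ∈ Λ then P ⟨v, h⟩ else ω v

/-- The cube `Λ_L = ([0,L) ∩ ℤ)^d`. -/
noncomputable def stdCube (d L : ℕ) : Finset (Zd d) :=
  Fintype.piFinset (fun _ => Finset.Ico (0 : ℤ) (L : ℤ))

/-!
For each residue class `s` of translations modulo `L`, the cubes `Λ_L - g` with `g ≡ s` tile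
`ℤ^d`; those lying in `Q` cover `Q` up to a remainder inside the `dL`-boundary of `Q`. Almost
additivity on each tiling, averaged over the `|Λ_L|` residues (which uses every cube
`Λ_L - g ⊆ Q` exactly once), gives
`‖F(Q)/|Q| - Σ_{Λ_L - g ⊆ Q} F(Λ_L - g)/(|Q| |Λ_L|)‖ ≤ b(Λ_L)/|Λ_L| + O(|∂^{dL} Q| + 1)/|Q|`.
Grouping the cubes by the pattern of `ω` they carry turns the sum into
`Σ_P ♯_P(ω|_Q) F̃(P)/(|Q| |Λ_L|)`, which tends to `S_L := Σ_P ν_P F̃(P)/|Λ_L|` along `Q_j`.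
So all limit points of `F(Q_j)/|Q_j|` lie within `b(Λ_L)/|Λ_L| → 0` of `S_L`: the `S_L` form a
Cauchy sequence and both sequences converge to its limit.
-/

section Approximation

variable {X : Type*} [MetricSpace X] {ι : Type*} {l : Filter ι}

theorem eventually_dist_le_of_tendsto {a A : ι → X} {s : X} {δ : ℝ} {e : ι → ℝ}
    (hA : Tendsto A l (𝓝 s)) (he : Tendsto e l (𝓝 0)) (h : ∀ j, dist (a j) (A j) ≤ δ + e j)
    {ε : ℝ} (hε : 0 < ε) : ∀ᶠ j in l, dist (a j) s ≤ δ + ε := by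
  filter_upwards [hA (Metric.ball_mem_nhds s (half_pos hε)), he (gt_mem_nhds (half_pos hε))]
    with j hAj hej
  calc dist (a j) s ≤ dist (a j) (A j) + dist (A j) s := dist_triangle _ _ _
    _ ≤ δ + ε := by
      have hAs : dist (A j) s < ε / 2 := hAj
      have he2 : e j < ε / 2 := hej
      linarith [h j]

theorem exists_tendsto_of_eventually_dist_le [CompleteSpace X] [l.NeBot] {a : ι → X}
    {S : ℕ → X} {δ : ℕ → ℝ} (hδ : Tendsto δ atTop (𝓝 0))
    (h : ∀ᶠ L in atTop, ∀ ε > 0, ∀ᶠ j in l, dist (a j) (S L) ≤ δ L + ε) :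
    ∃ x, Tendsto a l (𝓝 x) ∧ Tendsto S atTop (𝓝 x) := by
  have hsmall : ∀ ε > 0, ∀ᶠ L in atTop,
      δ L < ε ∧ ∀ ε > 0, ∀ᶠ j in l, dist (a j) (S L) ≤ δ L + ε :=
    fun ε hε => (hδ.eventually (gt_mem_nhds hε)).and h
  have hS : CauchySeq S := by
    refine Metric.cauchySeq_iff.2 fun ε hε => ?_
    obtain ⟨N, hN⟩ := eventually_atTop.1 (hsmall (ε / 3) (by positivity))
    refine ⟨N, fun m hm n hn => ?_⟩
    obtain ⟨hδm, hm⟩ := hN m hm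
    obtain ⟨hδn, hn⟩ := hN n hn
    obtain ⟨j, hjm, hjn⟩ := ((hm (ε / 6) (by positivity)).and (hn (ε / 6) (by positivity))).exists
    linarith [dist_triangle_left (S m) (S n) (a j)]
  obtain ⟨x, hx⟩ := cauchySeq_tendsto_of_complete hS
  refine ⟨x, Metric.tendsto_nhds.2 fun ε hε => ?_, hx⟩
  obtain ⟨L, ⟨hδL, hL⟩, hLx⟩ :=
    ((hsmall (ε / 3) (by positivity)).and (Metric.tendsto_nhds.1 hx (ε / 3) (by positivity))).exists
  filter_upwards [hL (ε / 3) (by positivity)] with j hj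
  linarith [dist_triangle (a j) (S L) x]

end Approximation

section Geometry

variable {d : ℕ}

theorem mem_translateZ {g v : Zd d} {Λ : Finset (Zd d)} :
    v ∈ translateZ g Λ ↔ v + g ∈ Λ := by
  simp [translateZ, sub_eq_iff_eq_add]

theorem sum_translateZ (g : Zd d) (Λ : Finset (Zd d)) :
    ∑ v ∈ translateZ g Λ, v = ∑ v ∈ Λ, v - Λ.card • g := by
  rw [translateZ, Finset.sum_image fun _ _ _ _ h => sub_left_injective h,
    Finset.sum_sub_distrib, Finset.sum_const]

theorem translateZ_injective {Λ : Finset (Zd d)} (hΛ : Λ.Nonempty) :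
    Function.Injective fun g => translateZ g Λ := by
  intro g g' h
  have hsum := congrArg (fun s => ∑ v ∈ s, v) h
  simp only [sum_translateZ, sub_right_inj] at hsum
  exact smul_right_injective _ hΛ.card_pos.ne' hsum

theorem distZ_comm (v w : Zd d) : distZ v w = distZ w v := by
  simp only [distZ, ← Int.natAbs_neg (v _ - w _), neg_sub]

theorem abs_sub_le_of_distZ_le {v w : Zd d} {r : ℕ} (h : distZ v w ≤ r) (i : Fin d) :
    |v i - w i| ≤ r := by
  rw [Int.abs_eq_natAbs, Nat.cast_le]
  exact (Finset.single_le_sum (fun j _ => Nat.zero_le (v j - w j).natAbs)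
    (Finset.mem_univ i)).trans h

noncomputable def boxZ (d : ℕ) (a b : ℤ) : Finset (Zd d) :=
  Fintype.piFinset fun _ => Finset.Ico a b

theorem stdCube_eq_boxZ (L : ℕ) : stdCube d L = boxZ d 0 L := rfl

theorem mem_boxZ {a b : ℤ} {v : Zd d} : v ∈ boxZ d a b ↔ ∀ i, a ≤ v i ∧ v i < b := by
  simp [boxZ]

theorem card_boxZ {a b : ℤ} (h : a ≤ b) : ((boxZ d a b).card : ℝ) = ((b - a : ℤ) : ℝ) ^ d := by
  rw [boxZ, Fintype.card_piFinset, Finset.prod_const, Int.card_Ico, Finset.card_univ,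
    Fintype.card_fin, Nat.cast_pow, ← Int.cast_natCast, Int.toNat_of_nonneg (by omega)]

theorem boxZ_mono {a a' b b' : ℤ} (ha : a ≤ a') (hb : b' ≤ b) : boxZ d a' b' ⊆ boxZ d a b := by
  intro v hv
  rw [mem_boxZ] at hv ⊢
  exact fun i => ⟨ha.trans (hv i).1, (hv i).2.trans_le hb⟩

theorem mem_boxZ_of_distZ_le {v w : Zd d} {r : ℕ} {a b : ℤ} (h : distZ v w ≤ r)
    (hw : w ∈ boxZ d a b) : v ∈ boxZ d (a - r) (b + r) := by
  rw [mem_boxZ] at hw ⊢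
  intro i
  have := abs_le.1 (abs_sub_le_of_distZ_le h i)
  constructor <;> linarith [hw i]

theorem mem_stdCube {L : ℕ} {v : Zd d} : v ∈ stdCube d L ↔ ∀ i, 0 ≤ v i ∧ v i < L :=
  mem_boxZ

theorem card_stdCube (L : ℕ) : ((stdCube d L).card : ℝ) = (L : ℝ) ^ d := by
  rw [stdCube_eq_boxZ, card_boxZ (Nat.cast_nonneg L)]
  simp

theorem zero_mem_stdCube {L : ℕ} (hL : 1 ≤ L) : (0 : Zd d) ∈ stdCube d L :=
  mem_stdCube.2 fun _ => ⟨le_rfl, by simp only [Pi.zero_apply]; omega⟩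

theorem rBoundaryZ_boxZ_subset (r : ℕ) (a b : ℤ) :
    rBoundaryZ r (boxZ d a b) ⊆ ↑(boxZ d (a - r) (b + r) \ boxZ d (a + r) (b - r)) := by
  have hinner : boxZ d (a + r) (b - r) ⊆ boxZ d a b := boxZ_mono (by omega) (by omega)
  rintro x (⟨hx, v, hv, hxv⟩ | ⟨hx, y, hy, hxy⟩)
  · exact Finset.mem_sdiff.2 ⟨mem_boxZ_of_distZ_le hxv hv, fun h => hx (hinner h)⟩
  · refine Finset.mem_sdiff.2 ⟨boxZ_mono (by omega) (by omega) hx, fun h => hy ?_⟩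
    simpa using mem_boxZ_of_distZ_le ((distZ_comm y x).trans_le hxy) h

theorem ncard_rBoundaryZ_boxZ_le {r : ℕ} {a b : ℤ} (h : 2 * r ≤ b - a) :
    ((rBoundaryZ r (boxZ d a b)).ncard : ℝ) ≤
      ((b - a + 2 * r : ℤ) : ℝ) ^ d - ((b - a - 2 * r : ℤ) : ℝ) ^ d := by
  have hsub : boxZ d (a + r) (b - r) ⊆ boxZ d (a - r) (b + r) := boxZ_mono (by omega) (by omega)
  calc ((rBoundaryZ r (boxZ d a b)).ncard : ℝ)
      ≤ ((boxZ d (a - r) (b + r) \ boxZ d (a + r) (b - r)).card : ℝ) := by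
        rw [← Set.ncard_coe_finset]
        exact_mod_cast Set.ncard_le_ncard (rBoundaryZ_boxZ_subset r a b) (Finset.finite_toSet _)
    _ = _ := by
        rw [Finset.card_sdiff_of_subset hsub, Nat.cast_sub (Finset.card_le_card hsub),
          card_boxZ (by omega), card_boxZ (by omega)]
        ring_nf

end Geometry

section Folner

variable {d : ℕ}

open Pointwise in
theorem rBoundaryZ_subset_add (r : ℕ) (Λ : Finset (Zd d)) :
    rBoundaryZ r Λ ⊆ ↑(Λ + boxZ d (-r) (r + 1)) := by
  have hball : ∀ v ∈ Λ, ∀ x, distZ x v ≤ r → x ∈ Λ + boxZ d (-r) (r + 1) := by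
    intro v hv x hx
    refine Finset.mem_add.2 ⟨v, hv, x - v, mem_boxZ.2 fun i => ?_, add_sub_cancel v x⟩
    have := abs_le.1 (abs_sub_le_of_distZ_le hx i)
    simp only [Pi.sub_apply]
    constructor <;> linarith
  rintro x (⟨-, v, hv, hx⟩ | ⟨hx, -⟩)
  · exact hball v hv x hx
  · exact hball x hx x (by simp [distZ])

theorem rBoundaryZ_finite (r : ℕ) (Λ : Finset (Zd d)) : (rBoundaryZ r Λ).Finite :=
  (Finset.finite_toSet _).subset (rBoundaryZ_subset_add r Λ)

theorem card_le_ncard_rBoundaryZ {r : ℕ} {Λ S : Finset (Zd d)} (h : ↑S ⊆ rBoundaryZ r Λ) :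
    S.card ≤ (rBoundaryZ r Λ).ncard := by
  rw [← Set.ncard_coe_finset]
  exact Set.ncard_le_ncard h (rBoundaryZ_finite r Λ)

theorem rBoundaryZ_one_nonempty (hd : 1 ≤ d) {Λ : Finset (Zd d)} (hΛ : Λ.Nonempty) :
    (rBoundaryZ 1 Λ).Nonempty := by
  let i₀ : Fin d := ⟨0, hd⟩
  obtain ⟨v, hv, hmax⟩ := Λ.exists_max_image (fun w => w i₀) hΛ
  refine ⟨v, Or.inr ⟨hv, Function.update v i₀ (v i₀ + 1), fun h => ?_, ?_⟩⟩
  · simpa using hmax _ h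
  · rw [distZ, Finset.sum_eq_single i₀ (fun i _ hi => by simp [hi]) (by simp)]
    simp

theorem IsFolnerZ.tendsto_inv_card (hd : 1 ≤ d) {Q : ℕ → Finset (Zd d)} (hQ : IsFolnerZ Q) :
    Tendsto (fun j => ((Q j).card : ℝ)⁻¹) atTop (𝓝 0) := by
  refine squeeze_zero (fun _ => by positivity) (fun j => ?_) (hQ.2 1 one_pos)
  have hone : (1 : ℝ) ≤ (rBoundaryZ 1 (Q j)).ncard := by
    exact_mod_cast (Set.ncard_pos (rBoundaryZ_finite 1 (Q j))).2
      (rBoundaryZ_one_nonempty hd (hQ.1 j))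
  rw [inv_eq_one_div]
  gcongr

theorem IsFolnerZ.tendsto_boundary_div_card (hd : 1 ≤ d) {Q : ℕ → Finset (Zd d)}
    (hQ : IsFolnerZ Q) {r : ℕ} (hr : 0 < r) (K c : ℝ) :
    Tendsto (fun j => (K * (rBoundaryZ r (Q j)).ncard + c) / (Q j).card) atTop (𝓝 0) := by
  have h := ((hQ.2 r hr).const_mul K).add ((hQ.tendsto_inv_card hd).const_mul c)
  simp only [mul_zero, add_zero] at h
  refine h.congr fun j => ?_
  rw [add_div, mul_div_assoc, div_eq_mul_inv c]

theorem isFolnerZ_stdCube_succ : IsFolnerZ fun n => stdCube d (n + 1) := by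
  refine ⟨fun n => ⟨0, zero_mem_stdCube (by omega)⟩, fun r _ => ?_⟩
  have ht : Tendsto (fun n : ℕ => (2 * r : ℝ) / (n + 1 : ℕ)) atTop (𝓝 0) :=
    (tendsto_const_div_atTop_nhds_zero_nat _).comp (tendsto_add_atTop_nat 1)
  have hlim : Tendsto (fun n : ℕ => (1 + (2 * r : ℝ) / (n + 1 : ℕ)) ^ d
      - (1 - (2 * r : ℝ) / (n + 1 : ℕ)) ^ d) atTop (𝓝 0) := by
    have h1 : Tendsto (fun _ : ℕ => (1 : ℝ)) atTop (𝓝 1) := tendsto_const_nhds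
    simpa using ((h1.add ht).pow d).sub ((h1.sub ht).pow d)
  refine squeeze_zero' (Eventually.of_forall fun _ => by positivity) ?_ hlim
  filter_upwards [eventually_ge_atTop (2 * r)] with n hn
  have hN : (0 : ℝ) < (n + 1 : ℕ) := by positivity
  have hbound := ncard_rBoundaryZ_boxZ_le (d := d) (r := r) (a := 0) (b := (n + 1 : ℕ))
    (by omega)
  rw [card_stdCube, div_le_iff₀ (by positivity), stdCube_eq_boxZ]
  refine hbound.trans_eq ?_
  rw [sub_mul, ← mul_pow, ← mul_pow, add_mul, sub_mul, div_mul_cancel₀ _ hN.ne']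
  push_cast
  ring

theorem BoundaryTermZ.tendsto_div_card_stdCube (b : BoundaryTermZ d) :
    Tendsto (fun L => b.b (stdCube d L) / (stdCube d L).card) atTop (𝓝 0) :=
  (tendsto_add_atTop_iff_nat 1).1 (b.folner _ isFolnerZ_stdCube_succ)

end Folner

section AlmostAdditive

variable {d : ℕ} {B : Type*} [NormedAddCommGroup B] {F : Finset (Zd d) → B}
  {b : BoundaryTermZ d}

theorem AlmostAdditiveZ.map_empty (hAA : AlmostAdditiveZ F b) : F ∅ = 0 := by
  simpa using hAA 0 Fin.elim0 (fun i => i.elim0)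

theorem AlmostAdditiveZ.norm_sub_sum_le (hAA : AlmostAdditiveZ F b) {ι : Type*}
    (s : Finset ι) (Λ : ι → Finset (Zd d)) (hΛ : (s : Set ι).PairwiseDisjoint Λ) :
    ‖F (s.biUnion Λ) - ∑ i ∈ s, F (Λ i)‖ ≤ ∑ i ∈ s, b.b (Λ i) := by
  let e := s.equivFin
  have hunion : Finset.univ.biUnion (fun k => Λ (e.symm k)) = s.biUnion Λ := by
    ext x
    simp only [Finset.mem_biUnion, Finset.mem_univ, true_and]
    exact ⟨fun ⟨k, hk⟩ => ⟨_, (e.symm k).2, hk⟩, fun ⟨i, hi, hx⟩ => ⟨e ⟨i, hi⟩, by simpa⟩⟩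
  have h := hAA s.card (fun k => Λ (e.symm k)) fun k k' hkk' =>
    hΛ (e.symm k).2 (e.symm k').2 fun h => hkk' (e.symm.injective (Subtype.ext h))
  rwa [hunion, e.symm.sum_comp fun i : s => F (Λ i), e.symm.sum_comp fun i : s => b.b (Λ i),
    Finset.sum_coe_sort s fun i => F (Λ i), Finset.sum_coe_sort s fun i => b.b (Λ i)] at h

theorem nonneg_of_forall_le_mul_card {f : Finset (Zd d) → ℝ} {c : ℝ} (hf : ∀ Λ, 0 ≤ f Λ)
    (h : ∀ Λ, Λ.Nonempty → f Λ ≤ c * Λ.card) : 0 ≤ c := by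
  simpa using (hf {0}).trans (h {0} (Finset.singleton_nonempty 0))

theorem AlmostAdditiveZ.norm_add_le_of_card_le (hAA : AlmostAdditiveZ F b) {C D β : ℝ}
    (hC : ∀ Λ, Λ.Nonempty → ‖F Λ‖ ≤ C * Λ.card) (hD : ∀ Λ, Λ.Nonempty → b.b Λ ≤ D * Λ.card)
    {R : Finset (Zd d)} (hR : (R.card : ℝ) ≤ β) :
    ‖F R‖ + b.b R ≤ (C + D) * β + b.b ∅ := by
  have hC0 : 0 ≤ C := nonneg_of_forall_le_mul_card (fun _ => norm_nonneg _) hC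
  have hD0 : 0 ≤ D := nonneg_of_forall_le_mul_card b.nonneg hD
  rcases R.eq_empty_or_nonempty with rfl | hne
  · have hβ : 0 ≤ β := by simpa using hR
    rw [hAA.map_empty, norm_zero, zero_add]
    nlinarith
  · nlinarith [hC R hne, hD R hne, b.nonneg ∅]

end AlmostAdditive

section Tiling

variable {d : ℕ}

noncomputable def cubeTranslates (L : ℕ) (Q : Finset (Zd d)) : Finset (Zd d) :=
  (Q.image Neg.neg).filter fun g => translateZ g (stdCube d L) ⊆ Q

theorem mem_cubeTranslates {L : ℕ} (hL : 1 ≤ L) {Q : Finset (Zd d)} {g : Zd d} :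
    g ∈ cubeTranslates L Q ↔ translateZ g (stdCube d L) ⊆ Q := by
  refine ⟨fun h => (Finset.mem_filter.1 h).2, fun h => Finset.mem_filter.2 ⟨?_, h⟩⟩
  have : -g ∈ translateZ g (stdCube d L) := mem_translateZ.2 (by simpa using zero_mem_stdCube hL)
  exact Finset.mem_image.2 ⟨-g, h this, neg_neg g⟩

theorem card_cubeTranslates_le (L : ℕ) (Q : Finset (Zd d)) :
    (cubeTranslates L Q).card ≤ Q.card :=
  (Finset.card_filter_le _ _).trans Finset.card_image_le

def residueZ (L : ℕ) (g : Zd d) : Zd d := fun i => g i % L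

theorem residueZ_mem_stdCube {L : ℕ} (hL : 1 ≤ L) (g : Zd d) : residueZ L g ∈ stdCube d L :=
  mem_stdCube.2 fun i => ⟨Int.emod_nonneg _ (by omega), Int.emod_lt_of_pos _ (by omega)⟩

theorem disjoint_translateZ_of_residueZ_eq {L : ℕ} {g g' : Zd d} (hne : g ≠ g')
    (h : residueZ L g = residueZ L g') :
    Disjoint (translateZ g (stdCube d L)) (translateZ g' (stdCube d L)) := by
  refine Finset.disjoint_left.2 fun x hx hx' => hne (funext fun i => ?_)
  have hx := (mem_stdCube.1 (mem_translateZ.1 hx)) i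
  have hx' := (mem_stdCube.1 (mem_translateZ.1 hx')) i
  simp only [Pi.add_apply] at hx hx'
  have hi : g i % L = g' i % L := congrFun h i
  calc g i = (x i + g i) % L - x i := by rw [Int.emod_eq_of_lt hx.1 hx.2]; ring
    _ = (x i + g' i) % L - x i := by rw [Int.add_emod, hi, ← Int.add_emod]
    _ = g' i := by rw [Int.emod_eq_of_lt hx'.1 hx'.2]; ring

/-- Indexes the cubes of the tiling `{Λ_L - g : g ≡ s mod L}` of `ℤ^d` that lie in `Q`. -/
noncomputable def cellsOfResidue (L : ℕ) (Q : Finset (Zd d)) (s : Zd d) : Finset (Zd d) :=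
  (cubeTranslates L Q).filter fun g => residueZ L g = s

noncomputable def remainderOfResidue (L : ℕ) (Q : Finset (Zd d)) (s : Zd d) : Finset (Zd d) :=
  Q \ (cellsOfResidue L Q s).biUnion fun g => translateZ g (stdCube d L)

/-- A point of `Q` not covered by the cells of residue `s` lies in a cube of that tiling
which leaves `Q`; that cube has `ℓ¹`-diameter at most `d L`. -/
theorem remainderOfResidue_subset_rBoundaryZ {L : ℕ} (hL : 1 ≤ L) (Q : Finset (Zd d))
    {s : Zd d} (hs : s ∈ stdCube d L) :
    ↑(remainderOfResidue L Q s) ⊆ rBoundaryZ (d * L) Q := by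
  intro x hx
  obtain ⟨hxQ, hxU⟩ := Finset.mem_sdiff.1 hx
  let g : Zd d := fun i => s i - L * ((x i + s i) / L)
  have hxg : x ∈ translateZ g (stdCube d L) := by
    refine mem_translateZ.2 (mem_stdCube.2 fun i => ?_)
    have h := Int.emod_def (x i + s i) L
    have h1 := Int.emod_nonneg (x i + s i) (by omega : (L : ℤ) ≠ 0)
    have h2 := Int.emod_lt_of_pos (x i + s i) (by omega : (0 : ℤ) < L)
    simp only [Pi.add_apply, g]
    constructor <;> linarith
  have hgs : residueZ L g = s := funext fun i => by
    have := (mem_stdCube.1 hs) i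
    simp [residueZ, g, Int.sub_emod, Int.emod_eq_of_lt this.1 this.2]
  have hnot : ¬ translateZ g (stdCube d L) ⊆ Q := fun hsub =>
    hxU (Finset.mem_biUnion.2
      ⟨g, Finset.mem_filter.2 ⟨(mem_cubeTranslates hL).2 hsub, hgs⟩, hxg⟩)
  obtain ⟨y, hyg, hyQ⟩ := Finset.not_subset.1 hnot
  refine Or.inr ⟨hxQ, y, hyQ, ?_⟩
  have hcoord : ∀ i, (x i - y i).natAbs ≤ L := fun i => by
    have hx := (mem_stdCube.1 (mem_translateZ.1 hxg)) i
    have hy := (mem_stdCube.1 (mem_translateZ.1 hyg)) i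
    simp only [Pi.add_apply] at hx hy
    omega
  calc distZ x y ≤ ∑ _i : Fin d, L := Finset.sum_le_sum fun i _ => hcoord i
    _ = d * L := by simp

variable {B : Type*} [NormedAddCommGroup B] {F : Finset (Zd d) → B} {b : BoundaryTermZ d}

theorem AlmostAdditiveZ.norm_sub_remainder_sub_sum_cells_le (hAA : AlmostAdditiveZ F b)
    (L : ℕ) (Q : Finset (Zd d)) (s : Zd d) :
    ‖F Q - (F (remainderOfResidue L Q s)
        + ∑ g ∈ cellsOfResidue L Q s, F (translateZ g (stdCube d L)))‖
      ≤ b.b (remainderOfResidue L Q s) + (cellsOfResidue L Q s).card * b.b (stdCube d L) := by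
  let Λ : Option (Zd d) → Finset (Zd d) :=
    fun o => o.elim (remainderOfResidue L Q s) fun g => translateZ g (stdCube d L)
  have hrem : ∀ g ∈ cellsOfResidue L Q s,
      Disjoint (remainderOfResidue L Q s) (translateZ g (stdCube d L)) := fun g hg =>
    Finset.sdiff_disjoint.mono_right
      (Finset.subset_biUnion_of_mem (fun g => translateZ g (stdCube d L)) hg)
  have hdisj : (↑(Finset.insertNone (cellsOfResidue L Q s)) : Set _).PairwiseDisjoint Λ := by
    rintro (_ | g) hg (_ | g') hg' hne
    · exact absurd rfl hne
    · exact hrem g' (Finset.some_mem_insertNone.1 hg')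
    · exact (hrem g (Finset.some_mem_insertNone.1 hg)).symm
    · refine disjoint_translateZ_of_residueZ_eq (fun h => hne (congrArg some h)) ?_
      rw [(Finset.mem_filter.1 (Finset.some_mem_insertNone.1 hg)).2,
        (Finset.mem_filter.1 (Finset.some_mem_insertNone.1 hg')).2]
  have hunion : (Finset.insertNone (cellsOfResidue L Q s)).biUnion Λ = Q := by
    ext x
    simp only [Finset.mem_biUnion, Option.exists, Finset.none_mem_insertNone,
      Finset.some_mem_insertNone, Option.elim, Λ, remainderOfResidue, Finset.mem_sdiff, true_and]
    constructor
    · rintro (⟨h, -⟩ | ⟨g, hg, hx⟩)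
      · exact h
      · exact (Finset.mem_filter.1 (Finset.mem_filter.1 hg).1).2 hx
    · exact fun hx => (em _).symm.imp (And.intro hx) id
  have h := hAA.norm_sub_sum_le _ Λ hdisj
  rw [hunion, Finset.sum_insertNone, Finset.sum_insertNone] at h
  simpa [Λ, b.invariant] using h

theorem AlmostAdditiveZ.norm_sub_sum_cellsOfResidue_le (hAA : AlmostAdditiveZ F b) {C D : ℝ}
    (hC : ∀ Λ, Λ.Nonempty → ‖F Λ‖ ≤ C * Λ.card) (hD : ∀ Λ, Λ.Nonempty → b.b Λ ≤ D * Λ.card)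
    {L : ℕ} (hL : 1 ≤ L) (Q : Finset (Zd d)) {s : Zd d} (hs : s ∈ stdCube d L) :
    ‖F Q - ∑ g ∈ cellsOfResidue L Q s, F (translateZ g (stdCube d L))‖
      ≤ (cellsOfResidue L Q s).card * b.b (stdCube d L)
        + ((C + D) * (rBoundaryZ (d * L) Q).ncard + b.b ∅) := by
  set R := remainderOfResidue L Q s
  have hR : ‖F R‖ + b.b R ≤ (C + D) * (rBoundaryZ (d * L) Q).ncard + b.b ∅ :=
    hAA.norm_add_le_of_card_le hC hD
      (by exact_mod_cast card_le_ncard_rBoundaryZ (remainderOfResidue_subset_rBoundaryZ hL Q hs))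
  calc ‖F Q - ∑ g ∈ cellsOfResidue L Q s, F (translateZ g (stdCube d L))‖
      = ‖(F Q - (F R + ∑ g ∈ cellsOfResidue L Q s, F (translateZ g (stdCube d L)))) + F R‖ := by
        congr 1; abel
    _ ≤ (b.b R + (cellsOfResidue L Q s).card * b.b (stdCube d L)) + ‖F R‖ :=
        (norm_add_le _ _).trans (add_le_add (hAA.norm_sub_remainder_sub_sum_cells_le L Q s) le_rfl)
    _ ≤ _ := by linarith

theorem AlmostAdditiveZ.norm_card_smul_sub_sum_cubeTranslates_le (hAA : AlmostAdditiveZ F b)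
    {C D : ℝ} (hC : ∀ Λ, Λ.Nonempty → ‖F Λ‖ ≤ C * Λ.card)
    (hD : ∀ Λ, Λ.Nonempty → b.b Λ ≤ D * Λ.card) {L : ℕ} (hL : 1 ≤ L) (Q : Finset (Zd d)) :
    ‖(stdCube d L).card • F Q - ∑ g ∈ cubeTranslates L Q, F (translateZ g (stdCube d L))‖
      ≤ Q.card * b.b (stdCube d L)
        + (stdCube d L).card * ((C + D) * (rBoundaryZ (d * L) Q).ncard + b.b ∅) := by
  have hmaps : ∀ g ∈ cubeTranslates L Q, residueZ L g ∈ stdCube d L :=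
    fun g _ => residueZ_mem_stdCube hL g
  have hcard : ((cubeTranslates L Q).card : ℝ)
      = ∑ s ∈ stdCube d L, ((cellsOfResidue L Q s).card : ℝ) := by
    exact_mod_cast Finset.card_eq_sum_card_fiberwise hmaps
  rw [← Finset.sum_fiberwise_of_maps_to hmaps, ← Finset.sum_const, ← Finset.sum_sub_distrib]
  refine (norm_sum_le _ _).trans ((Finset.sum_le_sum fun s hs =>
    hAA.norm_sub_sum_cellsOfResidue_le hC hD hL Q hs).trans ?_)
  rw [Finset.sum_add_distrib, ← Finset.sum_mul, Finset.sum_const, nsmul_eq_mul, ← hcard]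
  have hT : ((cubeTranslates L Q).card : ℝ) ≤ Q.card := by
    exact_mod_cast card_cubeTranslates_le L Q
  gcongr
  exact b.nonneg _

theorem AlmostAdditiveZ.norm_inv_card_smul_sub_le (hAA : AlmostAdditiveZ F b)
    [NormedSpace ℝ B] {C D : ℝ} (hC : ∀ Λ, Λ.Nonempty → ‖F Λ‖ ≤ C * Λ.card)
    (hD : ∀ Λ, Λ.Nonempty → b.b Λ ≤ D * Λ.card) {L : ℕ} (hL : 1 ≤ L) {Q : Finset (Zd d)}
    (hQ : Q.Nonempty) :
    ‖(Q.card : ℝ)⁻¹ • F Q - ((Q.card : ℝ) * (stdCube d L).card)⁻¹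
        • ∑ g ∈ cubeTranslates L Q, F (translateZ g (stdCube d L))‖
      ≤ b.b (stdCube d L) / (stdCube d L).card
        + ((C + D) * (rBoundaryZ (d * L) Q).ncard + b.b ∅) / Q.card := by
  have hQ0 : (0 : ℝ) < Q.card := by exact_mod_cast hQ.card_pos
  have hΛ0 : (0 : ℝ) < (stdCube d L).card := by
    exact_mod_cast Finset.card_pos.2 ⟨0, zero_mem_stdCube hL⟩
  have hsmul : (Q.card : ℝ)⁻¹ • F Q
      = ((Q.card : ℝ) * (stdCube d L).card)⁻¹ • ((stdCube d L).card • F Q) := by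
    rw [← Nat.cast_smul_eq_nsmul ℝ, smul_smul, mul_inv, mul_assoc, inv_mul_cancel₀ hΛ0.ne',
      mul_one]
  rw [hsmul, ← smul_sub, norm_smul, Real.norm_of_nonneg (by positivity)]
  calc _ ≤ ((Q.card : ℝ) * (stdCube d L).card)⁻¹ * (Q.card * b.b (stdCube d L)
        + (stdCube d L).card * ((C + D) * (rBoundaryZ (d * L) Q).ncard + b.b ∅)) :=
        mul_le_mul_of_nonneg_left (hAA.norm_card_smul_sub_sum_cubeTranslates_le hC hD hL Q)
          (by positivity)
    _ = _ := by field_simp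

end Tiling

section Patterns

variable {d : ℕ} {A : Type*}

open Classical in
theorem sharpZ_stdCube_eq_card_filter (ω : Zd d → A) {L : ℕ} (hL : 1 ≤ L) (Q : Finset (Zd d))
    (P : Zd d → A) :
    sharpZ (stdCube d L) P Q ω
      = ((cubeTranslates L Q).filter fun g => ∀ v ∈ stdCube d L, ω (v - g) = P v).card := by
  symm
  refine Finset.card_bij (fun g _ => translateZ g (stdCube d L)) ?_
    (fun g _ g' _ h => translateZ_injective ⟨0, zero_mem_stdCube hL⟩ h) ?_
  · intro g hg
    obtain ⟨hgT, hgP⟩ := Finset.mem_filter.1 hg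
    exact Finset.mem_filter.2
      ⟨Finset.mem_powerset.2 ((mem_cubeTranslates hL).1 hgT), g, rfl, hgP⟩
  · intro Λ hΛ
    obtain ⟨hΛQ, g, rfl, hgP⟩ := Finset.mem_filter.1 hΛ
    exact ⟨g, Finset.mem_filter.2
      ⟨(mem_cubeTranslates hL).2 (Finset.mem_powerset.1 hΛQ), hgP⟩, rfl⟩

variable [Fintype A]

theorem sum_sharpZ_smul_eq {B : Type*} [AddCommMonoid B] (ω : Zd d → A)
    (F : Finset (Zd d) → B) (Ft : Finset (Zd d) → (Zd d → A) → B) (hFt : IsPatternFnZ ω F Ft)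
    {L : ℕ} (hL : 1 ≤ L) (Q : Finset (Zd d)) :
    ∑ P : {x // x ∈ stdCube d L} → A, sharpZ (stdCube d L) (extendPatZ ω (stdCube d L) P) Q ω
        • Ft (stdCube d L) (extendPatZ ω (stdCube d L) P)
      = ∑ g ∈ cubeTranslates L Q, F (translateZ g (stdCube d L)) := by
  classical
  simp only [sharpZ_stdCube_eq_card_filter ω hL, ← Finset.sum_const, Finset.sum_filter]
  rw [Finset.sum_comm]
  refine Finset.sum_congr rfl fun g _ => ?_
  let P₀ : {x // x ∈ stdCube d L} → A := fun v => ω (v - g)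
  have hmatch : ∀ P, (∀ v ∈ stdCube d L, ω (v - g) = extendPatZ ω (stdCube d L) P v) ↔ P = P₀ := by
    intro P
    constructor
    · intro h
      funext v
      simpa [extendPatZ, P₀] using (h v v.2).symm
    · rintro rfl v hv
      simp [extendPatZ, P₀, hv]
  rw [Fintype.sum_eq_single P₀ fun P hP => if_neg fun h => hP ((hmatch P).1 h),
    if_pos ((hmatch P₀).2 rfl)]
  exact hFt.1 _ _ _ ⟨g, rfl, (hmatch P₀).2 rfl⟩

theorem sum_frequency_smul_eq {B : Type*} [NormedAddCommGroup B] [NormedSpace ℝ B]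
    (ω : Zd d → A) (F : Finset (Zd d) → B) (Ft : Finset (Zd d) → (Zd d → A) → B)
    (hFt : IsPatternFnZ ω F Ft) {L : ℕ} (hL : 1 ≤ L) (Q : Finset (Zd d)) :
    ∑ P : {x // x ∈ stdCube d L} → A,
        ((sharpZ (stdCube d L) (extendPatZ ω (stdCube d L) P) Q ω : ℝ) / Q.card)
          • (((stdCube d L).card : ℝ)⁻¹ • Ft (stdCube d L) (extendPatZ ω (stdCube d L) P))
      = ((Q.card : ℝ) * (stdCube d L).card)⁻¹
          • ∑ g ∈ cubeTranslates L Q, F (translateZ g (stdCube d L)) := by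
  rw [← sum_sharpZ_smul_eq ω F Ft hFt hL, Finset.smul_sum]
  refine Finset.sum_congr rfl fun P _ => ?_
  rw [← Nat.cast_smul_eq_nsmul ℝ, smul_smul, smul_smul]
  congr 1
  ring

end Patterns

theorem stmt1_general {d : ℕ} (hd : 1 ≤ d) {A : Type*} [Fintype A] (ω : Zd d → A)
    {B : Type*} [NormedAddCommGroup B] [NormedSpace ℝ B] [CompleteSpace B]
    (Q : ℕ → Finset (Zd d)) (hQ : IsFolnerZ Q)
    (F : Finset (Zd d) → B) (b : BoundaryTermZ d)
    (hAA : AlmostAdditiveZ F b)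
    (hBd : ∃ C : ℝ, ∀ Λ : Finset (Zd d), Λ.Nonempty → ‖F Λ‖ ≤ C * Λ.card)
    (Ft : Finset (Zd d) → (Zd d → A) → B) (hFt : IsPatternFnZ ω F Ft)
    (ν : Finset (Zd d) → (Zd d → A) → ℝ)
    (hν : ∀ (Λ : Finset (Zd d)) (P : Zd d → A),
      Tendsto (fun j => (sharpZ Λ P (Q j) ω : ℝ) / (Q j).card) atTop (nhds (ν Λ P))) :
    ∃ Fbar : B,
      Tendsto (fun j => ((Q j).card : ℝ)⁻¹ • F (Q j)) atTop (nhds Fbar) ∧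
      Tendsto (fun L => ∑ P : {x // x ∈ stdCube d L} → A,
          ν (stdCube d L) (extendPatZ ω (stdCube d L) P) •
            (((stdCube d L).card : ℝ)⁻¹ • Ft (stdCube d L) (extendPatZ ω (stdCube d L) P)))
        atTop (nhds Fbar) := by
  obtain ⟨C, hC⟩ := hBd
  obtain ⟨D, hD⟩ := b.bounded
  refine exists_tendsto_of_eventually_dist_le b.tendsto_div_card_stdCube ?_
  filter_upwards [eventually_ge_atTop 1] with L hL ε hε
  refine eventually_dist_le_of_tendsto (tendsto_finsetSum _ fun P _ => (hν _ _).smul_const _)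
    (hQ.tendsto_boundary_div_card hd (Nat.mul_pos hd hL) (C + D) (b.b ∅)) (fun j => ?_) hε
  rw [dist_eq_norm, sum_frequency_smul_eq ω F Ft hFt hL]
  exact hAA.norm_inv_card_smul_sub_le hC hD hL (hQ.1 j)

/-- **Theorem (Lenz–Müller–Veselić; existence of the thermodynamic limit for
finitely many colors on `ℤ^d`).**  For a finite color set `A`, a coloring
`ω ∈ A^{ℤ^d}`, a Banach space `B`, a Følner sequence `(Q_j)`, and a bounded,
`ω`-invariant, almost additive field `F` all of whose pattern frequencies
`ν_P` along `(Q_j)` exist, the limits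
`F̄ = lim_j F(Q_j)/|Q_j| = lim_L Σ_{P ∈ A^{Λ_L}} ν_P F̃(P)/|Λ_L|`
exist and are equal. -/
theorem stmt1 {d : ℕ} (hd : 1 ≤ d) {A : Type*} [Fintype A] (ω : Zd d → A)
    {B : Type*} [NormedAddCommGroup B] [NormedSpace ℝ B] [CompleteSpace B]
    (Q : ℕ → Finset (Zd d)) (hQ : IsFolnerZ Q)
    (F : Finset (Zd d) → B) (b : BoundaryTermZ d)
    (hAA : AlmostAdditiveZ F b) (hInv : InvariantZ ω F)
    (hBd : ∃ C : ℝ, ∀ Λ : Finset (Zd d), Λ.Nonempty → ‖F Λ‖ ≤ C * Λ.card)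
    (Ft : Finset (Zd d) → (Zd d → A) → B) (hFt : IsPatternFnZ ω F Ft)
    (ν : Finset (Zd d) → (Zd d → A) → ℝ)
    (hν : ∀ (Λ : Finset (Zd d)) (P : Zd d → A),
      Tendsto (fun j => (sharpZ Λ P (Q j) ω : ℝ) / (Q j).card) atTop (nhds (ν Λ P))) :
    ∃ Fbar : B,
      Tendsto (fun j => ((Q j).card : ℝ)⁻¹ • F (Q j)) atTop (nhds Fbar) ∧
      Tendsto (fun L => ∑ P : {x // x ∈ stdCube d L} → A,
          ν (stdCube d L) (extendPatZ ω (stdCube d L) P) •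
            (((stdCube d L).card : ℝ)⁻¹ • Ft (stdCube d L) (extendPatZ ω (stdCube d L) P)))
        atTop (nhds Fbar) :=
  stmt1_general hd ω Q hQ F b hAA hBd Ft hFt ν hν
end

section
/- Let (X_j)_{j∈ℕ} be independent, identically distributed real-valued random variables with distribution P, and let P̂_n := n^{-1} Σ_{j=1}^n δ_{X_j} be the empirical distribution. Then for every M > 0, almost surely, sup { | ∫ g dP̂_n − ∫ g dP | : g : ℝ → [−M,M] monotone } → 0 as n → ∞. -/
open Filter Topology MeasureTheory ProbabilityTheory

/-- The empirical distribution `P̂_n = n⁻¹ Σ_{j=1}^n δ_{X_j}`. -/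
noncomputable def empMeas {Ω : Type*} [MeasurableSpace Ω]
    (X : ℕ → Ω → ℝ) (n : ℕ) (ω : Ω) : Measure ℝ :=
  ((n : ENNReal))⁻¹ • ∑ j ∈ Finset.Icc 1 n, Measure.dirac (X j ω)

/-!
Replacing a monotone `g` by `-g` and shifting, it suffices to treat antitone `f` with values in
`[0, 2M]`. Its superlevel sets `{t ≤ f}` are lower sets of `ℝ`, so by the layer-cake formula
`|∫ f dP̂_n - ∫ f dP| ≤ 2M · sup_D |P̂_n(D) - P(D)|`, the supremum over lower sets `D`.

A lower set of `P`-mass `< c` lies in `{x | P(-∞, x] < c}`, itself a lower set of mass `≤ c`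
(approximate it from inside by compact sets, each contained in `(-∞, max K]`); dually for upper
sets and `{x | P[x, ∞) < c}`. So the level sets with `c` on a grid of mesh `h` bound `P̂_n(D)`
from above and, through `Dᶜ`, from below, up to `2h` plus their own errors. The strong law of large
numbers makes `P̂_n` converge on the countably many level sets with rational `c` almost surely,
and then the supremum over lower sets tends to `0`.
-/

open Set

theorem eventually_forall_measureReal_le_add_of_levels {α : Type*} [MeasurableSpace α]
    {μ : ℕ → Measure α} [∀ n, IsFiniteMeasure (μ n)] {ν : Measure α} [IsFiniteMeasure ν]
    {A : ℝ → Set α} (hA : ∀ c, 0 ≤ c → ν.real (A c) ≤ c)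
    (hconv : ∀ c : ℚ, Tendsto (fun n ↦ (μ n).real (A c)) atTop (𝓝 (ν.real (A c))))
    {𝒮 : Set (Set α)} (h𝒮 : ∀ S ∈ 𝒮, ∀ c, ν.real S < c → S ⊆ A c) {ε : ℝ} (hε : 0 < ε) :
    ∀ᶠ n in atTop, ∀ S ∈ 𝒮, (μ n).real S ≤ ν.real S + ε := by
  obtain ⟨N, hN⟩ := exists_nat_one_div_lt (half_pos hε)
  have hN₀ : (0 : ℝ) < N + 1 := by positivity
  set level : ℕ → ℚ := fun k ↦ k / (N + 1) with hlevel
  have hlevel_cast : ∀ k, (level k : ℝ) = k / (N + 1) := fun k ↦ by simp [hlevel]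
  have hgrid : ∀ᶠ n in atTop, ∀ k ∈ Finset.range (⌊ν.real univ * (N + 1)⌋₊ + 2),
      (μ n).real (A (level k)) < ν.real (A (level k)) + 1 / (N + 1) :=
    (eventually_all_finset _).2 fun k _ ↦
      (hconv (level k)).eventually_lt_const (lt_add_of_pos_right _ (by positivity))
  filter_upwards [hgrid] with n hn S hS
  set k := ⌊ν.real S * (N + 1)⌋₊ + 1 with hk
  have hk_mem : k ∈ Finset.range (⌊ν.real univ * (N + 1)⌋₊ + 2) := by
    have := Nat.floor_le_floor (a := ν.real S * (N + 1)) (b := ν.real univ * (N + 1))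
      (mul_le_mul_of_nonneg_right (measureReal_mono (subset_univ S)) hN₀.le)
    rw [Finset.mem_range]
    omega
  have hlt : ν.real S < level k := by
    rw [hlevel_cast, lt_div_iff₀ hN₀, hk]
    push_cast
    exact Nat.lt_floor_add_one _
  have hle : (level k : ℝ) ≤ ν.real S + 1 / (N + 1) := by
    rw [hlevel_cast, hk, ← sub_le_iff_le_add, ← sub_div]
    push_cast
    rw [add_sub_cancel_right, div_le_iff₀ hN₀]
    exact Nat.floor_le (by positivity)
  calc (μ n).real S ≤ (μ n).real (A (level k)) := measureReal_mono (h𝒮 S hS _ hlt)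
    _ ≤ ν.real (A (level k)) + 1 / (N + 1) := (hn k hk_mem).le
    _ ≤ level k + 1 / (N + 1) := by gcongr; exact hA _ (by rw [hlevel_cast]; positivity)
    _ ≤ ν.real S + ε := by linarith

section Order

variable {α : Type*} [ConditionallyCompleteLinearOrder α] [TopologicalSpace α] [OrderTopology α]
  [MeasurableSpace α] [OpensMeasurableSpace α] {ν : Measure α} [IsFiniteMeasure ν] [ν.InnerRegular]
  {A : Set α} {c : ℝ}

theorem measureReal_le_of_isLowerSet (hA : IsLowerSet A) (hc : 0 ≤ c)
    (h : ∀ x ∈ A, ν.real (Iic x) ≤ c) : ν.real A ≤ c := by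
  by_contra! hlt
  obtain ⟨K, hKA, hK, hcK⟩ := hA.ordConnected.measurableSet.exists_lt_isCompact
    ((ENNReal.ofReal_lt_iff_lt_toReal hc (measure_ne_top ν A)).2 hlt)
  have hKne : K.Nonempty := nonempty_of_measure_ne_zero (ne_bot_of_gt hcK)
  have hK_Iic : K ⊆ Iic (sSup K) := fun x hx ↦ le_csSup hK.bddAbove hx
  have hcK' : c < ν.real K := (ENNReal.ofReal_lt_iff_lt_toReal hc (measure_ne_top ν K)).1 hcK
  linarith [measureReal_mono (μ := ν) hK_Iic, h _ (hKA (hK.sSup_mem hKne))]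

theorem measureReal_le_of_isUpperSet (hA : IsUpperSet A) (hc : 0 ≤ c)
    (h : ∀ x ∈ A, ν.real (Ici x) ≤ c) : ν.real A ≤ c := by
  by_contra! hlt
  obtain ⟨K, hKA, hK, hcK⟩ := hA.ordConnected.measurableSet.exists_lt_isCompact
    ((ENNReal.ofReal_lt_iff_lt_toReal hc (measure_ne_top ν A)).2 hlt)
  have hKne : K.Nonempty := nonempty_of_measure_ne_zero (ne_bot_of_gt hcK)
  have hK_Ici : K ⊆ Ici (sInf K) := fun x hx ↦ csInf_le hK.bddBelow hx
  have hcK' : c < ν.real K := (ENNReal.ofReal_lt_iff_lt_toReal hc (measure_ne_top ν K)).1 hcK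
  linarith [measureReal_mono (μ := ν) hK_Ici, h _ (hKA (hK.sInf_mem hKne))]

end Order

section Levels

variable (ν : Measure ℝ) (c : ℝ)

def lowerLevel : Set ℝ := {x | ν.real (Iic x) < c}

def upperLevel : Set ℝ := {x | ν.real (Ici x) < c}

variable {ν c} [IsFiniteMeasure ν]

theorem isLowerSet_lowerLevel : IsLowerSet (lowerLevel ν c) :=
  fun _ _ hyx hx ↦ (measureReal_mono (Iic_subset_Iic.2 hyx)).trans_lt hx

theorem isUpperSet_upperLevel : IsUpperSet (upperLevel ν c) :=
  fun _ _ hxy hx ↦ (measureReal_mono (Ici_subset_Ici.2 hxy)).trans_lt hx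

theorem measureReal_lowerLevel_le (hc : 0 ≤ c) : ν.real (lowerLevel ν c) ≤ c :=
  measureReal_le_of_isLowerSet isLowerSet_lowerLevel hc fun _ hx ↦ le_of_lt hx

theorem measureReal_upperLevel_le (hc : 0 ≤ c) : ν.real (upperLevel ν c) ≤ c :=
  measureReal_le_of_isUpperSet isUpperSet_upperLevel hc fun _ hx ↦ le_of_lt hx

theorem IsLowerSet.subset_lowerLevel {D : Set ℝ} (hD : IsLowerSet D) (h : ν.real D < c) :
    D ⊆ lowerLevel ν c :=
  fun _ hx ↦ (measureReal_mono (hD.Iic_subset hx)).trans_lt h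

theorem IsUpperSet.subset_upperLevel {U : Set ℝ} (hU : IsUpperSet U) (h : ν.real U < c) :
    U ⊆ upperLevel ν c :=
  fun _ hx ↦ (measureReal_mono (hU.Ici_subset hx)).trans_lt h

end Levels

theorem eventually_forall_isLowerSet_abs_measureReal_sub_le {μ : ℕ → Measure ℝ}
    [∀ n, IsProbabilityMeasure (μ n)] {ν : Measure ℝ} [IsProbabilityMeasure ν]
    (hlower : ∀ c : ℚ,
      Tendsto (fun n ↦ (μ n).real (lowerLevel ν c)) atTop (𝓝 (ν.real (lowerLevel ν c))))
    (hupper : ∀ c : ℚ,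
      Tendsto (fun n ↦ (μ n).real (upperLevel ν c)) atTop (𝓝 (ν.real (upperLevel ν c))))
    {ε : ℝ} (hε : 0 < ε) :
    ∀ᶠ n in atTop, ∀ D : Set ℝ, IsLowerSet D → |(μ n).real D - ν.real D| ≤ ε := by
  have hle := eventually_forall_measureReal_le_add_of_levels (fun _ ↦ measureReal_lowerLevel_le)
    hlower (𝒮 := {D | IsLowerSet D}) (fun _ hD _ ↦ IsLowerSet.subset_lowerLevel hD) hε
  have hge := eventually_forall_measureReal_le_add_of_levels (fun _ ↦ measureReal_upperLevel_le)
    hupper (𝒮 := {U | IsUpperSet U}) (fun _ hU _ ↦ IsUpperSet.subset_upperLevel hU) hε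
  filter_upwards [hle, hge] with n hle hge D hD
  have hcompl := hge Dᶜ hD.compl
  rw [probReal_compl_eq_one_sub hD.ordConnected.measurableSet,
    probReal_compl_eq_one_sub hD.ordConnected.measurableSet] at hcompl
  exact abs_sub_le_iff.2 ⟨by linarith [hle D hD], by linarith⟩

theorem abs_integral_sub_le_of_forall_superlevel {α : Type*} [MeasurableSpace α]
    {μ ν : Measure α} [IsFiniteMeasure μ] [IsFiniteMeasure ν] {f : α → ℝ} (hf : Measurable f)
    {M r : ℝ} (hM : 0 ≤ M) (hfM : ∀ x, f x ∈ Icc 0 M)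
    (h : ∀ t, |μ.real {x | t ≤ f x} - ν.real {x | t ≤ f x}| ≤ r) :
    |∫ x, f x ∂μ - ∫ x, f x ∂ν| ≤ M * r := by
  have hlayer : ∀ (ρ : Measure α) [IsFiniteMeasure ρ],
      ∫ x, f x ∂ρ = ∫ t in Ioc 0 M, ρ.real {x | t ≤ f x} := fun ρ _ ↦
    (Integrable.of_bound hf.aestronglyMeasurable M (.of_forall fun x ↦ by
      rw [Real.norm_of_nonneg (hfM x).1]; exact (hfM x).2)).integral_eq_integral_Ioc_meas_le
      (.of_forall fun x ↦ (hfM x).1) (.of_forall fun x ↦ (hfM x).2)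
  have hint : ∀ (ρ : Measure α) [IsFiniteMeasure ρ],
      IntegrableOn (fun t ↦ ρ.real {x | t ≤ f x}) (Ioc 0 M) := fun ρ _ ↦
    have hanti : Antitone fun t ↦ ρ.real {x | t ≤ f x} :=
      fun _ _ hst ↦ measureReal_mono fun _ hx ↦ hst.trans hx
    (hanti.locallyIntegrable.integrableOn_isCompact isCompact_Icc).mono_set Ioc_subset_Icc_self
  rw [hlayer μ, hlayer ν, ← integral_sub (hint μ) (hint ν), ← Real.norm_eq_abs]
  calc _ ≤ r * volume.real (Ioc 0 M) :=
        norm_setIntegral_le_of_norm_le_const measure_Ioc_lt_top fun t _ ↦ h t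
    _ = M * r := by rw [Real.volume_real_Ioc, sub_zero, max_eq_left hM, mul_comm]

theorem abs_integral_sub_le_of_antitone_of_nonneg {μ ν : Measure ℝ} [IsFiniteMeasure μ]
    [IsFiniteMeasure ν] {f : ℝ → ℝ} (hf : Antitone f) {M r : ℝ} (hfM : ∀ x, f x ∈ Icc 0 M)
    (h : ∀ D : Set ℝ, IsLowerSet D → |μ.real D - ν.real D| ≤ r) :
    |∫ x, f x ∂μ - ∫ x, f x ∂ν| ≤ M * r :=
  abs_integral_sub_le_of_forall_superlevel hf.measurable ((hfM 0).1.trans (hfM 0).2) hfM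
    fun _ ↦ h _ fun _ _ hba ha ↦ le_trans ha (hf hba)

section Probability

variable {μ ν : Measure ℝ} [IsProbabilityMeasure μ] [IsProbabilityMeasure ν] {g : ℝ → ℝ} {M r : ℝ}

theorem abs_integral_sub_le_of_antitone (hg : Antitone g) (hgM : ∀ x, g x ∈ Icc (-M) M)
    (h : ∀ D : Set ℝ, IsLowerSet D → |μ.real D - ν.real D| ≤ r) :
    |∫ x, g x ∂μ - ∫ x, g x ∂ν| ≤ 2 * M * r := by
  have hshift : ∀ (ρ : Measure ℝ) [IsProbabilityMeasure ρ],
      ∫ x, g x + M ∂ρ = ∫ x, g x ∂ρ + M := fun ρ _ ↦ by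
    rw [integral_add (.of_bound hg.measurable.aestronglyMeasurable M
      (.of_forall fun x ↦ abs_le.2 (hgM x))) (integrable_const M), integral_const,
      probReal_univ, one_smul]
  have := abs_integral_sub_le_of_antitone_of_nonneg (μ := μ) (ν := ν) (M := 2 * M)
    (fun _ _ hab ↦ add_le_add_left (hg hab) M)
    (fun x ↦ ⟨by linarith [(hgM x).1], by linarith [(hgM x).2]⟩) h
  rwa [hshift, hshift, add_sub_add_right_eq_sub] at this

theorem abs_integral_sub_le_of_monotone_or_antitone (hg : Monotone g ∨ Antitone g)
    (hgM : ∀ x, g x ∈ Icc (-M) M)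
    (h : ∀ D : Set ℝ, IsLowerSet D → |μ.real D - ν.real D| ≤ r) :
    |∫ x, g x ∂μ - ∫ x, g x ∂ν| ≤ 2 * M * r := by
  rcases hg with hg | hg
  · have := abs_integral_sub_le_of_antitone hg.neg
      (fun x ↦ ⟨neg_le_neg (hgM x).2, neg_le.1 (hgM x).1⟩) h
    rwa [integral_neg, integral_neg, neg_sub_neg, abs_sub_comm] at this
  · exact abs_integral_sub_le_of_antitone hg hgM h

end Probability

theorem tendsto_iSup_abs_integral_sub_of_levels {μ : ℕ → Measure ℝ}
    [∀ n, IsProbabilityMeasure (μ n)] {ν : Measure ℝ} [IsProbabilityMeasure ν]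
    (hlower : ∀ c : ℚ,
      Tendsto (fun n ↦ (μ n).real (lowerLevel ν c)) atTop (𝓝 (ν.real (lowerLevel ν c))))
    (hupper : ∀ c : ℚ,
      Tendsto (fun n ↦ (μ n).real (upperLevel ν c)) atTop (𝓝 (ν.real (upperLevel ν c))))
    {M : ℝ} (hM : 0 < M) :
    Tendsto (fun n ↦ ⨆ g : {g : ℝ → ℝ // (Monotone g ∨ Antitone g) ∧ ∀ x, g x ∈ Icc (-M) M},
      |∫ x, g.1 x ∂μ n - ∫ x, g.1 x ∂ν|) atTop (𝓝 0) := by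
  refine Metric.tendsto_nhds.2 fun ε hε ↦ ?_
  filter_upwards [eventually_forall_isLowerSet_abs_measureReal_sub_le hlower hupper
    (div_pos hε (by positivity : 0 < 4 * M))] with n hn
  have hbound : ∀ g : {g : ℝ → ℝ // (Monotone g ∨ Antitone g) ∧ ∀ x, g x ∈ Icc (-M) M},
      |∫ x, g.1 x ∂μ n - ∫ x, g.1 x ∂ν| ≤ ε / 2 := fun g ↦
    (abs_integral_sub_le_of_monotone_or_antitone g.2.1 g.2.2 hn).trans_eq (by field_simp; ring)
  rw [Real.dist_0_eq_abs, abs_of_nonneg (Real.iSup_nonneg fun _ ↦ abs_nonneg _)]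
  exact (Real.iSup_le hbound (by positivity)).trans_lt (half_lt_self hε)

section Empirical

variable {Ω : Type*} [MeasurableSpace Ω] (X : ℕ → Ω → ℝ)

instance isProbabilityMeasure_empMeas_succ (n : ℕ) (ω : Ω) :
    IsProbabilityMeasure (empMeas X (n + 1) ω) := by
  constructor
  rw [empMeas, Measure.smul_apply, Measure.finsetSum_apply]
  simp [ENNReal.inv_mul_cancel]

theorem integral_empMeas (n : ℕ) (ω : Ω) (φ : ℝ → ℝ) :
    ∫ x, φ x ∂(empMeas X n ω) = (∑ j ∈ Finset.Icc 1 n, φ (X j ω)) / n := by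
  rw [empMeas, integral_smul_measure,
    integral_finsetSum_measure fun j _ ↦ integrable_dirac enorm_lt_top]
  simp [integral_dirac, div_eq_inv_mul]

variable {X} {P' : Measure Ω} {P : Measure ℝ} [IsProbabilityMeasure P]

theorem ae_tendsto_integral_empMeas (hindep : iIndepFun X P') (hdist : ∀ j, P'.map (X j) = P)
    {φ : ℝ → ℝ} (hφ : Measurable φ) (hint : Integrable φ P) :
    ∀ᵐ ω ∂P', Tendsto (fun n ↦ ∫ x, φ x ∂(empMeas X n ω)) atTop (𝓝 (∫ x, φ x ∂P)) := by
  have hX : ∀ j, AEMeasurable (X j) P' := fun j ↦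
    .of_map_ne_zero (by rw [hdist]; exact IsProbabilityMeasure.ne_zero P)
  have hslln := strong_law_ae_real (fun i ↦ φ ∘ X (i + 1))
    ((integrable_map_measure (by rw [hdist]; exact hφ.aestronglyMeasurable) (hX 1)).1
      (by rwa [hdist]))
    (fun i j hij ↦ (hindep.indepFun (by omega)).comp hφ hφ)
    (fun i ↦ IdentDistrib.comp ⟨hX _, hX _, by rw [hdist, hdist]⟩ hφ)
  have hmean : ∫ ω, (φ ∘ X (0 + 1)) ω ∂P' = ∫ x, φ x ∂P := by
    rw [← hdist 1, integral_map (hX 1) (by rw [hdist]; exact hφ.aestronglyMeasurable)]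
    rfl
  rw [hmean] at hslln
  filter_upwards [hslln] with ω hω
  refine hω.congr fun n ↦ ?_
  rw [integral_empMeas, ← Finset.Ico_add_one_right_eq_Icc, Finset.sum_Ico_eq_sum_range]
  simp [add_comm]

theorem ae_tendsto_measureReal_empMeas (hindep : iIndepFun X P') (hdist : ∀ j, P'.map (X j) = P)
    {S : Set ℝ} (hS : MeasurableSet S) :
    ∀ᵐ ω ∂P', Tendsto (fun n ↦ (empMeas X n ω).real S) atTop (𝓝 (P.real S)) := by
  simpa only [integral_indicator_one hS] using ae_tendsto_integral_empMeas hindep hdist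
    (measurable_one.indicator hS) ((integrable_const 1).indicator hS)

end Empirical

theorem stmt17_general {Ω : Type*} [MeasurableSpace Ω] (P' : Measure Ω)
    (X : ℕ → Ω → ℝ)
    (hindep : iIndepFun X P')
    (P : Measure ℝ) [IsProbabilityMeasure P] (hdist : ∀ j, P'.map (X j) = P)
    (M : ℝ) (hM : 0 < M) :
    ∀ᵐ ω ∂P', Tendsto
      (fun n => ⨆ g : {g : ℝ → ℝ //
          (Monotone g ∨ Antitone g) ∧ ∀ x, g x ∈ Set.Icc (-M) M},
        |∫ x, g.1 x ∂(empMeas X n ω) - ∫ x, g.1 x ∂P|)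
      atTop (nhds 0) := by
  have hlevels : ∀ᵐ ω ∂P', ∀ c : ℚ,
      Tendsto (fun n ↦ (empMeas X n ω).real (lowerLevel P c)) atTop
        (𝓝 (P.real (lowerLevel P c))) ∧
      Tendsto (fun n ↦ (empMeas X n ω).real (upperLevel P c)) atTop
        (𝓝 (P.real (upperLevel P c))) :=
    ae_all_iff.2 fun c ↦ (ae_tendsto_measureReal_empMeas hindep hdist
      isLowerSet_lowerLevel.ordConnected.measurableSet).and
      (ae_tendsto_measureReal_empMeas hindep hdist
        isUpperSet_upperLevel.ordConnected.measurableSet)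
  filter_upwards [hlevels] with ω hω
  rw [← tendsto_add_atTop_iff_nat 1]
  exact tendsto_iSup_abs_integral_sub_of_levels
    (fun c ↦ (tendsto_add_atTop_iff_nat 1).2 (hω c).1)
    (fun c ↦ (tendsto_add_atTop_iff_nat 1).2 (hω c).2) hM

/-- **Theorem (Glivenko–Cantelli, uniform over bounded monotone functions).**
For i.i.d. real random variables with distribution `P`, almost surely
`sup { |∫ g dP̂_n − ∫ g dP| : g : ℝ → [−M,M] monotone } → 0`. -/
theorem stmt17 {Ω : Type*} [MeasurableSpace Ω] (P' : Measure Ω) [IsProbabilityMeasure P']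
    (X : ℕ → Ω → ℝ) (hmeas : ∀ j, Measurable (X j))
    (hindep : iIndepFun X P')
    (P : Measure ℝ) [IsProbabilityMeasure P] (hdist : ∀ j, P'.map (X j) = P)
    (M : ℝ) (hM : 0 < M) :
    ∀ᵐ ω ∂P', Tendsto
      (fun n => ⨆ g : {g : ℝ → ℝ //
          (Monotone g ∨ Antitone g) ∧ ∀ x, g x ∈ Set.Icc (-M) M},
        |∫ x, g.1 x ∂(empMeas X n ω) - ∫ x, g.1 x ∂P|)
      atTop (nhds 0) :=
  stmt17_general P' X hindep P hdist M hM
end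

section
/- Let μ and ν be probability measures on ℝ and let g : ℝ → ℝ be bounded and monotone. Then | ∫ g dμ − ∫ g dν | ≤ (sup_{x∈ℝ} g(x) − inf_{x∈ℝ} g(x)) · sup_{E∈ℝ} | μ((−∞,E]) − ν((−∞,E]) |. -/
/-!
By the layer-cake formula, `∫ (g - a) dρ = ∫₀^{b-a} ρ {g - a > t} dt` when `a ≤ g ≤ b`, so the
difference of the integrals against `μ` and `ν` is an integral over `(0, b - a]` of differences of
measures of superlevel sets. For monotone `g` these are upper sets of `ℝ`, i.e. `∅`, `ℝ` or rays
`(r, ∞)`, `[r, ∞)`, the complements of `(-∞, r]` and of `(-∞, r) = ⋃ₙ (-∞, uₙ]` with `uₙ ↑ r`; so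
each difference is at most the Kolmogorov distance `sup_E |μ(-∞, E] - ν(-∞, E]|`. The antitone case
follows by applying the monotone one to `-g`.
-/

open MeasureTheory Set Filter Topology

noncomputable def kolmogorovDist (μ ν : Measure ℝ) : ℝ :=
  ⨆ E : ℝ, |μ.real (Iic E) - ν.real (Iic E)|

theorem IsUpperSet.eq_empty_or_eq_univ_or_eq_Ioi_or_eq_Ici {α : Type*}
    [ConditionallyCompleteLinearOrder α] {s : Set α} (hs : IsUpperSet s) :
    s = ∅ ∨ s = univ ∨ s = Ioi (sInf s) ∨ s = Ici (sInf s) := by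
  rcases s.eq_empty_or_nonempty with hempty | hne
  · exact Or.inl hempty
  by_cases hbdd : BddBelow s
  · by_cases hmem : sInf s ∈ s
    · exact Or.inr (Or.inr (Or.inr (Set.ext fun x => ⟨csInf_le hbdd, fun hx => hs hx hmem⟩)))
    · refine Or.inr (Or.inr (Or.inl (Set.ext fun x => ⟨fun hx => ?_, fun hx => ?_⟩)))
      · exact (csInf_le hbdd hx).lt_of_ne fun h => hmem (h ▸ hx)
      · obtain ⟨y, hy, hyx⟩ := exists_lt_of_csInf_lt hne hx
        exact hs hyx.le hy
  · refine Or.inr (Or.inl (eq_univ_of_forall fun x => ?_))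
    obtain ⟨y, hy, hyx⟩ := not_bddBelow_iff.1 hbdd x
    exact hs hyx.le hy

theorem abs_probReal_compl_sub {α : Type*} [MeasurableSpace α] {μ ν : Measure α}
    [IsProbabilityMeasure μ] [IsProbabilityMeasure ν] {s : Set α} (hs : MeasurableSet s) :
    |μ.real sᶜ - ν.real sᶜ| = |μ.real s - ν.real s| := by
  rw [probReal_compl_eq_one_sub hs, probReal_compl_eq_one_sub hs, abs_sub_comm]
  ring_nf

theorem MeasureTheory.Integrable.integral_eq_setIntegral_Ioc_meas_lt {α : Type*}
    [MeasurableSpace α] {μ : Measure α} {f : α → ℝ} {c : ℝ} (hf : Integrable f μ)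
    (hf0 : 0 ≤ᵐ[μ] f) (hfc : ∀ x, f x ≤ c) :
    ∫ x, f x ∂μ = ∫ t in Ioc 0 c, μ.real {x | t < f x} := by
  rw [hf.integral_eq_integral_meas_lt hf0]
  refine setIntegral_eq_of_subset_of_forall_sdiff_eq_zero measurableSet_Ioi Ioc_subset_Ioi_self
    fun t ht => ?_
  have hct : c < t := not_le.1 fun h => ht.2 ⟨ht.1, h⟩
  simp [fun x => ((hfc x).trans_lt hct).not_gt]

theorem integrableOn_measureReal_lt {α : Type*} [MeasurableSpace α] (μ : Measure α)
    [IsFiniteMeasure μ] (f : α → ℝ) (a b : ℝ) :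
    IntegrableOn (fun t => μ.real {x | t < f x}) (Ioc a b) := by
  have hanti : Antitone fun t => μ.real {x | t < f x} :=
    fun s t hst => measureReal_mono fun x hx => hst.trans_lt hx
  exact ((hanti.antitoneOn _).integrableOn_isCompact isCompact_Icc).mono_set Ioc_subset_Icc_self

theorem Monotone.integrable_of_le_of_le {μ : Measure ℝ} [IsFiniteMeasure μ] {g : ℝ → ℝ}
    {a b : ℝ} (hg : Monotone g) (ha : ∀ x, a ≤ g x) (hb : ∀ x, g x ≤ b) : Integrable g μ :=
  .of_bound hg.measurable.aestronglyMeasurable (max |a| |b|)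
    (Eventually.of_forall fun x => abs_le_max_abs_abs (ha x) (hb x))

namespace kolmogorovDist

variable (μ ν : Measure ℝ) [IsProbabilityMeasure μ] [IsProbabilityMeasure ν]

theorem bddAbove : BddAbove (range fun E => |μ.real (Iic E) - ν.real (Iic E)|) := by
  refine ⟨1, forall_mem_range.2 fun E => abs_sub_le_iff.2 ⟨?_, ?_⟩⟩ <;>
    linarith [measureReal_le_one (μ := μ) (s := Iic E), measureReal_le_one (μ := ν) (s := Iic E),
      measureReal_nonneg (μ := μ) (s := Iic E), measureReal_nonneg (μ := ν) (s := Iic E)]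

theorem abs_sub_Iic_le (E : ℝ) : |μ.real (Iic E) - ν.real (Iic E)| ≤ kolmogorovDist μ ν :=
  le_ciSup (bddAbove μ ν) E

theorem nonneg : 0 ≤ kolmogorovDist μ ν :=
  (abs_nonneg _).trans (abs_sub_Iic_le μ ν 0)

theorem abs_sub_Iio_le (r : ℝ) : |μ.real (Iio r) - ν.real (Iio r)| ≤ kolmogorovDist μ ν := by
  obtain ⟨u, hu_mono, hu_lt, hu_lim⟩ := exists_seq_strictMono_tendsto r
  have hunion : ⋃ n, Iic (u n) = Iio r := iUnion_Iic_eq_Iio_of_lt_of_tendsto hu_lt hu_lim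
  have hIic : Monotone fun n => Iic (u n) := fun m n hmn => Iic_subset_Iic.2 (hu_mono.monotone hmn)
  have hlim (ρ : Measure ℝ) [IsProbabilityMeasure ρ] :
      Tendsto (fun n => ρ.real (Iic (u n))) atTop (𝓝 (ρ.real (Iio r))) := by
    rw [← hunion]
    exact (ENNReal.tendsto_toReal (measure_ne_top ρ _)).comp (tendsto_measure_iUnion_atTop hIic)
  exact le_of_tendsto ((hlim μ).sub (hlim ν)).abs
    (Eventually.of_forall fun n => abs_sub_Iic_le μ ν (u n))

theorem abs_sub_le_of_isUpperSet {s : Set ℝ} (hs : IsUpperSet s) :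
    |μ.real s - ν.real s| ≤ kolmogorovDist μ ν := by
  rcases hs.eq_empty_or_eq_univ_or_eq_Ioi_or_eq_Ici with h | h | h | h <;> rw [h]
  · simpa using nonneg μ ν
  · simpa using nonneg μ ν
  · rw [← compl_Iic, abs_probReal_compl_sub measurableSet_Iic]
    exact abs_sub_Iic_le μ ν _
  · rw [← compl_Iio, abs_probReal_compl_sub measurableSet_Iio]
    exact abs_sub_Iio_le μ ν _

end kolmogorovDist

section BoundedMonotone

variable {μ ν : Measure ℝ} [IsProbabilityMeasure μ] [IsProbabilityMeasure ν] {g : ℝ → ℝ}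

theorem abs_integral_sub_le_of_monotone_of_nonneg {c : ℝ} (hg : Monotone g)
    (hg0 : ∀ x, 0 ≤ g x) (hgc : ∀ x, g x ≤ c) :
    |∫ x, g x ∂μ - ∫ x, g x ∂ν| ≤ c * kolmogorovDist μ ν := by
  have hint (ρ : Measure ℝ) [IsProbabilityMeasure ρ] : Integrable g ρ :=
    hg.integrable_of_le_of_le hg0 hgc
  have hlevel (t : ℝ) : IsUpperSet {x | t < g x} := fun x y hxy hx => hx.trans_le (hg hxy)
  rw [(hint μ).integral_eq_setIntegral_Ioc_meas_lt (Eventually.of_forall hg0) hgc,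
    (hint ν).integral_eq_setIntegral_Ioc_meas_lt (Eventually.of_forall hg0) hgc,
    ← integral_sub (integrableOn_measureReal_lt μ g 0 c) (integrableOn_measureReal_lt ν g 0 c),
    ← Real.norm_eq_abs, mul_comm]
  calc _ ≤ kolmogorovDist μ ν * volume.real (Ioc 0 c) :=
        norm_setIntegral_le_of_norm_le_const measure_Ioc_lt_top
          fun t _ => kolmogorovDist.abs_sub_le_of_isUpperSet μ ν (hlevel t)
    _ = kolmogorovDist μ ν * c := by
        rw [Real.volume_real_Ioc_of_le ((hg0 0).trans (hgc 0)), sub_zero]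

theorem abs_integral_sub_le_of_monotone {a b : ℝ} (hg : Monotone g) (ha : ∀ x, a ≤ g x)
    (hb : ∀ x, g x ≤ b) :
    |∫ x, g x ∂μ - ∫ x, g x ∂ν| ≤ (b - a) * kolmogorovDist μ ν := by
  have hint (ρ : Measure ℝ) [IsProbabilityMeasure ρ] : Integrable g ρ :=
    hg.integrable_of_le_of_le ha hb
  have hshift := abs_integral_sub_le_of_monotone_of_nonneg (μ := μ) (ν := ν)
    (g := fun x => g x - a) (fun x y hxy => sub_le_sub_right (hg hxy) a)
    (fun x => sub_nonneg.2 (ha x)) (fun x => sub_le_sub_right (hb x) a)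
  rw [integral_sub (hint μ) (integrable_const a), integral_sub (hint ν) (integrable_const a)]
    at hshift
  simpa only [integral_const, probReal_univ, one_smul, sub_sub_sub_cancel_right] using hshift

theorem abs_integral_sub_le_of_antitone_s18 {a b : ℝ} (hg : Antitone g) (ha : ∀ x, a ≤ g x)
    (hb : ∀ x, g x ≤ b) :
    |∫ x, g x ∂μ - ∫ x, g x ∂ν| ≤ (b - a) * kolmogorovDist μ ν := by
  have hneg := abs_integral_sub_le_of_monotone (μ := μ) (ν := ν) hg.neg
    (fun x => neg_le_neg (hb x)) (fun x => neg_le_neg (ha x))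
  rwa [integral_neg, integral_neg, neg_sub_neg, abs_sub_comm, neg_sub_neg] at hneg

end BoundedMonotone

/-- **Theorem (partial-integration estimate for bounded monotone test
functions).**  For probability measures `μ, ν` on `ℝ` and bounded monotone
`g : ℝ → ℝ`,
`|∫ g dμ − ∫ g dν| ≤ (sup g − inf g) · sup_E |μ((−∞,E]) − ν((−∞,E])|`. -/
theorem stmt18 (μ ν : Measure ℝ) [IsProbabilityMeasure μ] [IsProbabilityMeasure ν]
    (g : ℝ → ℝ) (hb : ∃ M : ℝ, ∀ x, |g x| ≤ M) (hmono : Monotone g ∨ Antitone g) :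
    |∫ x, g x ∂μ - ∫ x, g x ∂ν|
      ≤ (sSup (Set.range g) - sInf (Set.range g)) *
        ⨆ E : ℝ, |(μ (Set.Iic E)).toReal - (ν (Set.Iic E)).toReal| := by
  obtain ⟨M, hM⟩ := hb
  have hlower (x : ℝ) : sInf (range g) ≤ g x :=
    csInf_le ⟨-M, forall_mem_range.2 fun y => (abs_le.1 (hM y)).1⟩ (mem_range_self x)
  have hupper (x : ℝ) : g x ≤ sSup (range g) :=
    le_csSup ⟨M, forall_mem_range.2 fun y => (abs_le.1 (hM y)).2⟩ (mem_range_self x)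
  rcases hmono with hg | hg
  · exact abs_integral_sub_le_of_monotone hg hlower hupper
  · exact abs_integral_sub_le_of_antitone_s18 hg hlower hupper
end
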